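/- arXiv:2510.11962 — 3 statements merged into one kernel-verified Lean document; each statement's English description precedes it below -/
import Mathlib

section
/- Let T be a positive natural number, let x₀ ∈ ℝ, and let β : Fin T → ℝ with 0 < β_t < 1 for all t. Set α_t := 1 − β_t and ᾱ_t := ∏_{s ≤ t} α_s. Consider the product measure ⊗_{t<T} N(0,1) on ℝ^T and define recursively X_0(z) := √α_0·x₀ + √β_0·z_0 and X_{t}(z) := √α_t·X_{t−1}(z) + √β_t·z_t for t ≥ 1, where z = (z_0,…,z_{T−1}) ∈ ℝ^T. Then for every t < T, the pushforward of ⊗_{s<T} N(0,1) under the map z ↦ X_t(z) equals the Gaussian measure N(√ᾱ_t·x₀, 1 − ᾱ_t). -/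
/-!
Induct on `t`, carrying along that `X_t` is measurable with respect to the coordinates `z_s`,
`s ≤ t`. Then `X_t` is independent of `z_{t+1}`, so `X_{t+1} = √α X_t + √(1 - α) z_{t+1}` is a
sum of independent Gaussians, with mean `√(α ᾱ_t) x₀` and variance
`α (1 - ᾱ_t) + (1 - α) = 1 - ᾱ_{t+1}`. Starting from the constant `X_{-1} = x₀`, whose `ᾱ` is
the empty product `1`, the case `t = 0` is a step like any other.
-/

open MeasureTheory ProbabilityTheory Real

theorem Fin.Iic_mk_zero {T : ℕ} (hT : 0 < T) :
    Finset.Iic (⟨0, hT⟩ : Fin T) = {⟨0, hT⟩} := by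
  ext s
  simp [Fin.le_def, Fin.ext_iff]

theorem Fin.Iic_mk_succ {T n : ℕ} (h : n + 1 < T) :
    Finset.Iic (⟨n + 1, h⟩ : Fin T) =
      insert ⟨n + 1, h⟩ (Finset.Iic ⟨n, Nat.lt_of_succ_lt h⟩) := by
  ext s
  simp only [Finset.mem_Iic, Finset.mem_insert, Fin.le_def, Fin.ext_iff]
  omega

namespace ProbabilityTheory

theorem iIndepFun.indepFun_of_measurable_biSup {Ω ι γ : Type*} {mΩ : MeasurableSpace Ω}
    {μ : Measure Ω} {β : ι → Type*} {mβ : ∀ i, MeasurableSpace (β i)} [MeasurableSpace γ]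
    {f : ∀ i, Ω → β i} (hf : iIndepFun f μ) (hmeas : ∀ i, Measurable (f i))
    {S : Set ι} {j : ι} (hj : j ∉ S) {Y : Ω → γ}
    (hY : Measurable[⨆ i ∈ S, (mβ i).comap (f i)] Y) :
    IndepFun Y (f j) μ := by
  rw [IndepFun_iff_Indep]
  have h := indep_iSup_of_disjoint (fun i => (hmeas i).comap_le) hf.iIndep
    (Set.disjoint_singleton_right.2 hj)
  rw [iSup_singleton] at h
  exact indep_of_indep_of_le_left h hY.comap_le

theorem IndepFun.hasLaw_sqrt_mul_add_sqrt_one_sub_mul {Ω : Type*} {mΩ : MeasurableSpace Ω}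
    {P : Measure Ω} {Y Z : Ω → ℝ} {a p x₀ : ℝ} (ha₀ : 0 ≤ a) (ha₁ : a ≤ 1) (hp₀ : 0 ≤ p)
    (hp₁ : p ≤ 1) (hY : HasLaw Y (gaussianReal (√p * x₀) (1 - p).toNNReal) P)
    (hZ : HasLaw Z (gaussianReal 0 1) P) (hYZ : IndepFun Y Z P) :
    HasLaw (fun ω => √a * Y ω + √(1 - a) * Z ω)
      (gaussianReal (√(a * p) * x₀) (1 - a * p).toNNReal) P := by
  have h := (hYZ.comp (measurable_const_mul √a) (measurable_const_mul √(1 - a))).hasLaw_add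
    (gaussianReal_const_mul hY √a) (gaussianReal_const_mul hZ √(1 - a))
  rw [gaussianReal_conv_gaussianReal] at h
  convert h using 2
  · rfl
  · rw [sqrt_mul ha₀]; ring
  · apply NNReal.eq
    simp only [NNReal.coe_add, NNReal.coe_mul, NNReal.coe_mk, NNReal.coe_one,
      Real.coe_toNNReal _ (sub_nonneg.2 hp₁), sq_sqrt ha₀, sq_sqrt (sub_nonneg.2 ha₁),
      Real.coe_toNNReal _ (sub_nonneg.2 (mul_le_one₀ ha₁ hp₀ hp₁))]
    ring

end ProbabilityTheory

section ForwardProcess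

variable {Ω ι : Type*} {mΩ : MeasurableSpace Ω} (P : Measure Ω) (Z : ι → Ω → ℝ) (α : ι → ℝ)
  (x₀ : ℝ)

-- `Y` is a state of the forward process that has consumed the noises `Z i`, `i ∈ S`,
-- so that `∏ i ∈ S, α i` plays the role of `ᾱ`.
def IsForwardMarginal (S : Finset ι) (Y : Ω → ℝ) : Prop :=
  Measurable[⨆ i ∈ S, Real.measurableSpace.comap (Z i)] Y ∧
    HasLaw Y (gaussianReal (√(∏ i ∈ S, α i) * x₀) (1 - ∏ i ∈ S, α i).toNNReal) P

theorem isForwardMarginal_empty [IsProbabilityMeasure P] :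
    IsForwardMarginal P Z α x₀ ∅ (fun _ => x₀) := by
  refine ⟨measurable_const, ?_⟩
  simpa [gaussianReal_zero_var] using hasLaw_dirac_of_ae_eq (P := P) (x := x₀) .rfl

variable {P Z α x₀} [DecidableEq ι]

theorem IsForwardMarginal.step (hZ : iIndepFun Z P) (hZm : ∀ i, Measurable (Z i))
    (hZlaw : ∀ i, HasLaw (Z i) (gaussianReal 0 1) P) (hα₀ : ∀ i, 0 ≤ α i) (hα₁ : ∀ i, α i ≤ 1)
    {S : Finset ι} {j : ι} (hj : j ∉ S) {Y : Ω → ℝ} (hY : IsForwardMarginal P Z α x₀ S Y) :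
    IsForwardMarginal P Z α x₀ (insert j S) (fun ω => √(α j) * Y ω + √(1 - α j) * Z j ω) := by
  obtain ⟨hYm, hYlaw⟩ := hY
  refine ⟨?_, ?_⟩
  · have hY' : Measurable[⨆ i ∈ insert j S, Real.measurableSpace.comap (Z i)] Y :=
      hYm.mono (biSup_mono fun _ => Finset.mem_insert_of_mem) le_rfl
    have hZj : Measurable[⨆ i ∈ insert j S, Real.measurableSpace.comap (Z i)] (Z j) :=
      .of_comap_le (le_iSup₂_of_le j (Finset.mem_insert_self j S) le_rfl)
    exact (hY'.const_mul _).add (hZj.const_mul _)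
  · rw [Finset.prod_insert hj]
    exact (hZ.indepFun_of_measurable_biSup hZm (S := ↑S) hj hYm)
      |>.hasLaw_sqrt_mul_add_sqrt_one_sub_mul (hα₀ j) (hα₁ j) (Finset.prod_nonneg fun i _ => hα₀ i)
      (Finset.prod_le_one (fun i _ => hα₀ i) fun i _ => hα₁ i) hYlaw (hZlaw j)

end ForwardProcess

/-- Closed-form marginal of the diffusion forward process (Equation (3)/(4) of the
paper), one coordinate: with `α_t := 1 − β_t`, `ᾱ_t := ∏_{s ≤ t} α_s`, and the
recursion `X_0(z) = √α_0·x₀ + √β_0·z_0`, `X_{t+1}(z) = √α_{t+1}·X_t(z) + √β_{t+1}·z_{t+1}`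
driven by i.i.d. standard Gaussian coordinates `z ~ ⊗_{t<T} N(0,1)`, the law of
`X_t` is `N(√ᾱ_t·x₀, 1 − ᾱ_t)`. -/
theorem forward_process_closed_form (T : ℕ) (hT : 0 < T) (x₀ : ℝ)
    (β : Fin T → ℝ) (hβ : ∀ t, 0 < β t ∧ β t < 1)
    (α : Fin T → ℝ) (hα : ∀ t, α t = 1 - β t)
    (abar : Fin T → ℝ) (habar : ∀ t, abar t = ∏ s ∈ Finset.Iic t, α s)
    (X : Fin T → (Fin T → ℝ) → ℝ)
    (hX0 : ∀ z : Fin T → ℝ,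
      X ⟨0, hT⟩ z = Real.sqrt (α ⟨0, hT⟩) * x₀ + Real.sqrt (β ⟨0, hT⟩) * z ⟨0, hT⟩)
    (hXrec : ∀ (t : ℕ) (ht : t + 1 < T) (z : Fin T → ℝ),
      X ⟨t + 1, ht⟩ z
        = Real.sqrt (α ⟨t + 1, ht⟩) * X ⟨t, Nat.lt_of_succ_lt ht⟩ z
          + Real.sqrt (β ⟨t + 1, ht⟩) * z ⟨t + 1, ht⟩) :
    ∀ t : Fin T,
      Measure.map (X t) (Measure.pi fun _ : Fin T => gaussianReal 0 1)
        = gaussianReal (Real.sqrt (abar t) * x₀) (Real.toNNReal (1 - abar t)) := by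
  set P := Measure.pi fun _ : Fin T => gaussianReal 0 1
  have hβα : β = fun t => 1 - α t := funext fun t => by rw [hα]; ring
  have hZ : iIndepFun (fun s (z : Fin T → ℝ) => z s) P := iIndepFun_pi fun _ => aemeasurable_id
  have hstep {S : Finset (Fin T)} {j : Fin T} (hj : j ∉ S) {Y : (Fin T → ℝ) → ℝ}
      (hY : IsForwardMarginal P (fun s z => z s) α x₀ S Y) :=
    hY.step hZ measurable_pi_apply
      (fun s => (measurePreserving_eval (fun _ => gaussianReal 0 1) s).hasLaw)
      (fun t => by linarith [hα t, hβ t]) (fun t => by linarith [hα t, hβ t]) hj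
  suffices H : ∀ n (h : n < T),
      IsForwardMarginal P (fun s z => z s) α x₀ (.Iic ⟨n, h⟩) (X ⟨n, h⟩) by
    intro t
    rw [habar]
    exact (H t t.2).2.map_eq
  intro n
  induction n with
  | zero =>
    intro h
    rw [Fin.Iic_mk_zero h, ← insert_empty_eq, funext (hX0 ·), hβα]
    exact hstep (Finset.notMem_empty _) (isForwardMarginal_empty P _ α x₀)
  | succ n ih =>
    intro h
    rw [Fin.Iic_mk_succ h, funext (hXrec n h ·), hβα]
    exact hstep (by simp [Fin.le_def]) (ih _)
end

section
/- Let n be a natural number, H : Matrix (Fin n) (Fin n) ℝ a positive definite symmetric matrix, w ∈ ℝⁿ, and S a nonempty proper subset of Fin n (the set of pruned indices), with ι : S ↪ Fin n the inclusion. Write A := (H⁻¹).submatrix ι ι for the principal submatrix of H⁻¹ on S (which is positive definite, hence invertible), w_S ∈ ℝ^S for the restriction of w to S, and B := (H⁻¹).submatrix ι id ∈ Matrix S (Fin n) ℝ for the rows of H⁻¹ indexed by S. Define ŵ := w − w_S · A⁻¹ · B (a vector in ℝⁿ, where w_S·A⁻¹ ∈ ℝ^S acts on the rows of B). Then ŵ_i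 = 0 for every i ∈ S. -/
open Matrix

namespace Matrix

variable {m n R : Type*} [Fintype m] [CommRing R]

theorem vecMul_submatrix_id_comp (v : m → R) (M : Matrix n n R) (e : m → n) :
    (v ᵥ* M.submatrix e id) ∘ e = v ᵥ* M.submatrix e e :=
  rfl

/-- The compensation `(w ∘ e) A⁻¹ M_{e,:}` agrees with `w` on the coordinates `e`, since
restricted to them it is `(w ∘ e) A⁻¹ A` with `A = M_{e,e}`. -/
theorem sub_vecMul_inv_submatrix_vecMul_comp_eq_zero [DecidableEq m] (M : Matrix n n R)
    (e : m → n) (hA : IsUnit (M.submatrix e e)) (w : n → R) :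
    (w - (w ∘ e) ᵥ* (M.submatrix e e)⁻¹ ᵥ* M.submatrix e id) ∘ e = 0 := by
  rw [Pi.sub_comp, vecMul_submatrix_id_comp, vecMul_vecMul,
    nonsing_inv_mul _ ((isUnit_iff_isUnit_det _).mp hA), vecMul_one, sub_self]

end Matrix

theorem obs_update_feasible_general (n : ℕ) (H : Matrix (Fin n) (Fin n) ℝ) (hH : H.PosDef)
    (w : Fin n → ℝ) (S : Finset (Fin n)) :
    ∀ i ∈ S,
      (fun j : Fin n => w j -
          Matrix.vecMul
            (Matrix.vecMul (fun s : {i // i ∈ S} => w s.1)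
              (((H⁻¹).submatrix (fun s : {i // i ∈ S} => s.1)
                  (fun s : {i // i ∈ S} => s.1))⁻¹))
            ((H⁻¹).submatrix (fun s : {i // i ∈ S} => s.1) id) j) i = 0 := by
  intro i hi
  have hA : IsUnit ((H⁻¹).submatrix (Subtype.val : S → Fin n) Subtype.val) :=
    (hH.inv.submatrix Subtype.val_injective).isUnit
  exact congrFun (sub_vecMul_inv_submatrix_vecMul_comp_eq_zero _ _ hA w) ⟨i, hi⟩

/-- Feasibility of the Optimal Brain Surgeon update (Equation (19) of the paper):
with `H` positive definite symmetric, `S` a nonempty proper set of pruned indices,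
`A = (H⁻¹)_{S,S}`, `B = (H⁻¹)_{S,:}` and `w_S` the restriction of `w` to `S`, the
updated row `ŵ = w − w_S·A⁻¹·B` vanishes on every pruned coordinate `i ∈ S`. -/
theorem obs_update_feasible (n : ℕ) (H : Matrix (Fin n) (Fin n) ℝ) (hH : H.PosDef)
    (w : Fin n → ℝ) (S : Finset (Fin n)) (hS : S.Nonempty) (hS' : S ≠ Finset.univ) :
    ∀ i ∈ S,
      (fun j : Fin n => w j -
          Matrix.vecMul
            (Matrix.vecMul (fun s : {i // i ∈ S} => w s.1)
              (((H⁻¹).submatrix (fun s : {i // i ∈ S} => s.1)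
                  (fun s : {i // i ∈ S} => s.1))⁻¹))
            ((H⁻¹).submatrix (fun s : {i // i ∈ S} => s.1) id) j) i = 0 :=
  obs_update_feasible_general n H hH w S
end

section
/- Let n be a natural number, H : Matrix (Fin n) (Fin n) ℝ a positive definite symmetric matrix, w ∈ ℝⁿ, and S a nonempty proper subset of Fin n, with ι : S ↪ Fin n the inclusion. Write A := (H⁻¹).submatrix ι ι for the principal submatrix of H⁻¹ on S (positive definite, hence invertible), w_S ∈ ℝ^S for the restriction of w to S, and B := (H⁻¹).submatrix ι id for the rows of H⁻¹ indexed by S. Then the minimum of the quadratic form (v − w)·H·(v − w)ᵀ over all v ∈ ℝⁿ satisfying v_i = 0 for all i ∈ S equals w_S · A⁻¹ · w_Sᵀ, and it is attained at v = w − w_S · A⁻¹ · B. -/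
/-!
Let `B = (H⁻¹)_{S,:}`. Since `B·H` is the identity restricted to the rows `S`, the row vector
`c·B·H` pairs with any `u` as `c·u_S`. Taking `c = w_S·A⁻¹`, the correction `δ = c·B` agrees with
`w` on `S` (as `c·A = w_S`), so `w - δ` vanishes on `S`, and `δ` is `H`-orthogonal to every vector
vanishing on `S`. For admissible `v` this gives the Pythagorean splitting
`(v - w)·H·(v - w)ᵀ = δ·H·δᵀ + (v - (w - δ))·H·(v - (w - δ))ᵀ`, where the last term is
nonnegative and `δ·H·δᵀ = c·δ_Sᵀ = c·w_Sᵀ`.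
-/

open Matrix

namespace Matrix

variable {ι κ R : Type*} [Fintype ι]

theorem IsSymm.dotProduct_mulVec_add_self [CommRing R] {H : Matrix ι ι R} (hH : H.IsSymm)
    (x y : ι → R) :
    (x + y) ⬝ᵥ H *ᵥ (x + y) = x ⬝ᵥ H *ᵥ x + 2 * (x ⬝ᵥ H *ᵥ y) + y ⬝ᵥ H *ᵥ y := by
  have hyx : y ⬝ᵥ H *ᵥ x = x ⬝ᵥ H *ᵥ y := by
    rw [dotProduct_comm, ← vecMul_transpose, hH.eq, dotProduct_mulVec]
  rw [mulVec_add, dotProduct_add, add_dotProduct, add_dotProduct, hyx]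
  ring

theorem inv_submatrix_mul_self [CommRing R] [DecidableEq ι] {H : Matrix ι ι R}
    (hH : IsUnit H.det) (e : κ → ι) :
    (H⁻¹).submatrix e id * H = (1 : Matrix ι ι R).submatrix e id := by
  rw [← nonsing_inv_mul H hH, submatrix_mul _ _ e id id Function.bijective_id, submatrix_id_id]

theorem one_submatrix_mulVec [NonAssocSemiring R] [DecidableEq ι] (e : κ → ι) (u : ι → R) :
    (1 : Matrix ι ι R).submatrix e id *ᵥ u = u ∘ e := by
  ext k
  simp [mulVec, dotProduct, one_apply]

end Matrix

section

variable {ι κ R : Type*} [Fintype ι] [DecidableEq ι] [Fintype κ] [DecidableEq κ]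

/-- The paper's compensation is `-obsCorrection H e w`, with the pruned set `S` the range of `e`. -/
noncomputable def obsCorrection [CommRing R] (H : Matrix ι ι R) (e : κ → ι) (w : ι → R) : ι → R :=
  (w ∘ e) ᵥ* ((H⁻¹).submatrix e e)⁻¹ ᵥ* (H⁻¹).submatrix e id

noncomputable def obsSaliency [CommRing R] (H : Matrix ι ι R) (e : κ → ι) (w : ι → R) : R :=
  (w ∘ e) ᵥ* ((H⁻¹).submatrix e e)⁻¹ ⬝ᵥ (w ∘ e)

variable [CommRing R] {H : Matrix ι ι R} {e : κ → ι}

theorem obsCorrection_comp (hA : IsUnit ((H⁻¹).submatrix e e).det) (w : ι → R) :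
    obsCorrection H e w ∘ e = w ∘ e := by
  change (w ∘ e) ᵥ* ((H⁻¹).submatrix e e)⁻¹ ᵥ* (H⁻¹).submatrix e e = w ∘ e
  rw [vecMul_vecMul, nonsing_inv_mul _ hA, vecMul_one]

theorem obsCorrection_dotProduct_mulVec (hH : IsUnit H.det) (w u : ι → R) :
    obsCorrection H e w ⬝ᵥ H *ᵥ u = (w ∘ e) ᵥ* ((H⁻¹).submatrix e e)⁻¹ ⬝ᵥ (u ∘ e) := by
  rw [dotProduct_mulVec, obsCorrection, vecMul_vecMul, inv_submatrix_mul_self hH,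
    ← dotProduct_mulVec, one_submatrix_mulVec]

theorem obsCorrection_dotProduct_mulVec_self (hH : IsUnit H.det)
    (hA : IsUnit ((H⁻¹).submatrix e e).det) (w : ι → R) :
    obsCorrection H e w ⬝ᵥ H *ᵥ obsCorrection H e w = obsSaliency H e w := by
  rw [obsCorrection_dotProduct_mulVec hH, obsCorrection_comp hA, obsSaliency]

theorem dotProduct_mulVec_sub_eq_obsSaliency_add (hHs : H.IsSymm) (hH : IsUnit H.det)
    (hA : IsUnit ((H⁻¹).submatrix e e).det) {w v : ι → R} (hv : v ∘ e = 0) :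
    (v - w) ⬝ᵥ H *ᵥ (v - w) = obsSaliency H e w +
      (v - (w - obsCorrection H e w)) ⬝ᵥ H *ᵥ (v - (w - obsCorrection H e w)) := by
  have hu : (v - (w - obsCorrection H e w)) ∘ e = 0 := by
    rw [Pi.sub_comp, Pi.sub_comp, obsCorrection_comp hA, hv, sub_self, sub_zero]
  have hsplit : v - w = -obsCorrection H e w + (v - (w - obsCorrection H e w)) := by abel
  rw [hsplit, hHs.dotProduct_mulVec_add_self, neg_dotProduct, mulVec_neg, dotProduct_neg, neg_neg,
    obsCorrection_dotProduct_mulVec_self hH hA, neg_dotProduct, obsCorrection_dotProduct_mulVec hH,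
    hu, dotProduct_zero, neg_zero, mul_zero, add_zero]

end

theorem obs_optimality_general (n : ℕ) (H : Matrix (Fin n) (Fin n) ℝ) (hH : H.PosDef)
    (w : Fin n → ℝ) (S : Finset (Fin n)) :
    let A := (H⁻¹).submatrix (fun s : {i // i ∈ S} => s.1) (fun s : {i // i ∈ S} => s.1)
    let B := (H⁻¹).submatrix (fun s : {i // i ∈ S} => s.1) id
    let wS := fun s : {i // i ∈ S} => w s.1
    let vhat := fun j : Fin n => w j - Matrix.vecMul (Matrix.vecMul wS A⁻¹) B j
    IsLeast
        {q : ℝ | ∃ v : Fin n → ℝ, (∀ i ∈ S, v i = 0) ∧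
          q = dotProduct (v - w) (Matrix.mulVec H (v - w))}
        (dotProduct (Matrix.vecMul wS A⁻¹) wS)
      ∧ (∀ i ∈ S, vhat i = 0)
      ∧ dotProduct (vhat - w) (Matrix.mulVec H (vhat - w))
          = dotProduct (Matrix.vecMul wS A⁻¹) wS := by
  intro A B wS vhat
  have hHs : H.IsSymm := isHermitian_iff_isSymm.mp hH.isHermitian
  have hHdet : IsUnit H.det := (isUnit_iff_isUnit_det H).mp hH.isUnit
  have hAdet : IsUnit A.det :=
    (isUnit_iff_isUnit_det A).mp (hH.inv.submatrix Subtype.val_injective).isUnit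
  have hvhat_eq : vhat = w - obsCorrection H (Subtype.val : S → Fin n) w := rfl
  have hvhat : vhat ∘ (Subtype.val : S → Fin n) = 0 := by
    rw [hvhat_eq, Pi.sub_comp, obsCorrection_comp hAdet, sub_self]
  have hdecomp {v : Fin n → ℝ} (hv : v ∘ (Subtype.val : S → Fin n) = 0) :=
    dotProduct_mulVec_sub_eq_obsSaliency_add hHs hHdet hAdet (w := w) hv
  have hval : (vhat - w) ⬝ᵥ H *ᵥ (vhat - w) = obsSaliency H (Subtype.val : S → Fin n) w := by
    rw [hdecomp hvhat, hvhat_eq, sub_self, mulVec_zero, dotProduct_zero, add_zero]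
  refine ⟨⟨⟨vhat, fun i hi => congrFun hvhat ⟨i, hi⟩, hval.symm⟩, ?_⟩,
    fun i hi => congrFun hvhat ⟨i, hi⟩, hval⟩
  rintro q ⟨v, hv, rfl⟩
  rw [hdecomp (funext fun s => hv s s.2)]
  exact le_add_of_nonneg_right (hH.posSemidef.dotProduct_mulVec_nonneg _)

/-- The Optimal Brain Surgeon optimality result (Equations (18)–(19) of the paper):
with `H` positive definite symmetric, `S` a nonempty proper set of pruned indices,
`A = (H⁻¹)_{S,S}`, `B = (H⁻¹)_{S,:}` and `w_S` the restriction of `w` to `S`, the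
minimum of the quadratic form `(v − w)·H·(v − w)ᵀ` over vectors `v` vanishing on `S`
equals the saliency `w_S·A⁻¹·w_Sᵀ`, and it is attained at `v = w − w_S·A⁻¹·B`. -/
theorem obs_optimality (n : ℕ) (H : Matrix (Fin n) (Fin n) ℝ) (hH : H.PosDef)
    (w : Fin n → ℝ) (S : Finset (Fin n)) (hS : S.Nonempty) (hS' : S ≠ Finset.univ) :
    let A := (H⁻¹).submatrix (fun s : {i // i ∈ S} => s.1) (fun s : {i // i ∈ S} => s.1)
    let B := (H⁻¹).submatrix (fun s : {i // i ∈ S} => s.1) id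
    let wS := fun s : {i // i ∈ S} => w s.1
    let vhat := fun j : Fin n => w j - Matrix.vecMul (Matrix.vecMul wS A⁻¹) B j
    IsLeast
        {q : ℝ | ∃ v : Fin n → ℝ, (∀ i ∈ S, v i = 0) ∧
          q = dotProduct (v - w) (Matrix.mulVec H (v - w))}
        (dotProduct (Matrix.vecMul wS A⁻¹) wS)
      ∧ (∀ i ∈ S, vhat i = 0)
      ∧ dotProduct (vhat - w) (Matrix.mulVec H (vhat - w))
          = dotProduct (Matrix.vecMul wS A⁻¹) wS :=
  obs_optimality_general n H hH w S
end
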